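/- arXiv:2009.11915 — 4 statements merged into one kernel-verified Lean document; each statement's English description precedes it below -/
import Mathlib

section
/- For every fixed t > 0 and y > 0, the spatial derivative ∂G/∂x(t,x,y) (which exists for all x < 0) converges, as x → 0⁻, to the limit ∂G/∂x(t,0⁻,y) = ((1+β)/(√(2πt)·√a₂))·(√a₂·√a₁·y/(a₁a₂t))·exp(−y²/(2a₂t)). -/
open Real Set Filter MeasureTheory

noncomputable def fPiece (a₁ a₂ y : ℝ) : ℝ :=
  if y ≤ 0 then y / Real.sqrt a₁ else y / Real.sqrt a₂

noncomputable def signFun (y : ℝ) : ℝ :=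
  if 0 < y then 1 else if y < 0 then -1 else 0

noncomputable def G (a₁ a₂ β t x y : ℝ) : ℝ :=
  (1 / Real.sqrt (2 * Real.pi * t)) *
    (if y ≤ 0 then 1 / Real.sqrt a₁ else 1 / Real.sqrt a₂) *
    (Real.exp (-(fPiece a₁ a₂ x - fPiece a₁ a₂ y) ^ 2 / (2 * t)) +
      β * signFun y * Real.exp (-(|fPiece a₁ a₂ x| + |fPiece a₁ a₂ y|) ^ 2 / (2 * t)))

/-!
For `x ≤ 0 < y` we have `|f x| + |f y| = f y - f x`, so the reflected term of `G` is the direct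
term times `β`, and on the closed left half-line `G` is the single Gaussian
`(1 + β) / (√(2πt) √a₂) · exp (-(x/√a₁ - y/√a₂)² / (2t))`. This Gaussian is smooth on all of `ℝ`,
so the one-sided limit of `∂G/∂x` at `0⁻` is its derivative at `0`.
-/

open Topology

theorem tendsto_deriv_nhdsLT_of_eqOn_Iio {E : Type*} [NormedAddCommGroup E] [NormedSpace ℝ E]
    {f g g' : ℝ → E} {a : ℝ} (hfg : EqOn f g (Iio a)) (hg : ∀ x < a, HasDerivAt g (g' x) x)
    (hg' : ContinuousWithinAt g' (Iio a) a) :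
    Tendsto (deriv f) (𝓝[<] a) (𝓝 (g' a)) := by
  refine hg'.tendsto.congr' ?_
  filter_upwards [self_mem_nhdsWithin] with x hx
  exact ((hg x hx).congr_of_eventuallyEq (hfg.eventuallyEq_of_mem (Iio_mem_nhds hx))).deriv.symm

theorem hasDerivAt_const_mul_exp_neg_sq_div (c s b t x : ℝ) :
    HasDerivAt (fun x => c * exp (-(x / s - b) ^ 2 / (2 * t)))
      (c * exp (-(x / s - b) ^ 2 / (2 * t)) * (-(x / s - b) / (s * t))) x := by
  have h := ((((hasDerivAt_id x).div_const s).sub_const b).pow 2).neg.div_const (2 * t)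
  refine (h.exp.const_mul c).congr_deriv ?_
  simp only [id, Pi.pow_apply, Pi.neg_apply]
  ring

theorem G_eqOn_Iic (a₁ a₂ β t : ℝ) {y : ℝ} (hy : 0 < y) :
    EqOn (fun x => G a₁ a₂ β t x y)
      (fun x => (1 + β) / (√(2 * π * t) * √a₂) * exp (-(x / √a₁ - y / √a₂) ^ 2 / (2 * t)))
      (Iic 0) := by
  intro x (hx : x ≤ 0)
  have hx' : |x / √a₁| = -(x / √a₁) :=
    abs_of_nonpos (div_nonpos_of_nonpos_of_nonneg hx (sqrt_nonneg _))
  have hy' : |y / √a₂| = y / √a₂ := abs_of_nonneg (div_nonneg hy.le (sqrt_nonneg _))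
  simp only [G, fPiece, signFun, if_pos hx, if_neg hy.not_ge, if_pos hy, hx', hy']
  ring_nf

theorem G_deriv_limit_left_general (a₁ a₂ β : ℝ)
    (ha₁ : 0 < a₁) (ha₂ : 0 < a₂)
    (t y : ℝ) (hy : 0 < y) :
    (∀ x < (0:ℝ), DifferentiableAt ℝ (fun ξ => G a₁ a₂ β t ξ y) x) ∧
    Filter.Tendsto (fun x => deriv (fun ξ => G a₁ a₂ β t ξ y) x)
      (nhdsWithin 0 (Set.Iio 0))
      (nhds ((1 + β) / (Real.sqrt (2 * Real.pi * t) * Real.sqrt a₂) *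
        (Real.sqrt a₂ * Real.sqrt a₁ * y / (a₁ * a₂ * t)) *
        Real.exp (-y ^ 2 / (2 * a₂ * t)))) := by
  have hG := (G_eqOn_Iic a₁ a₂ β t hy).mono Iio_subset_Iic_self
  have hderiv x := hasDerivAt_const_mul_exp_neg_sq_div
    ((1 + β) / (√(2 * π * t) * √a₂)) (√a₁) (y / √a₂) t x
  refine ⟨fun x hx => ((hderiv x).congr_of_eventuallyEq
    (hG.eventuallyEq_of_mem (Iio_mem_nhds hx))).differentiableAt, ?_⟩
  convert tendsto_deriv_nhdsLT_of_eqOn_Iio hG (fun x _ => hderiv x) (by fun_prop) using 2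
  have h₁ := sq_sqrt ha₁.le
  have h₂ := sq_sqrt ha₂.le
  have hexponent : -(0 / √a₁ - y / √a₂) ^ 2 / (2 * t) = -y ^ 2 / (2 * a₂ * t) := by
    field_simp
    rw [h₂]
    ring
  have hslope : -(0 / √a₁ - y / √a₂) / (√a₁ * t) = √a₂ * √a₁ * y / (a₁ * a₂ * t) := by
    rw [← div_div, ← div_div _ (a₁ * a₂)]
    congr 1
    field_simp
    linear_combination (-√a₁ * y * √a₂ ^ 2) * h₁ + (-√a₁ * y * a₁) * h₂
  rw [hexponent, hslope]
  ring

theorem G_deriv_limit_left (a₁ a₂ ρ₁ ρ₂ α β : ℝ)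
    (ha₁ : 0 < a₁) (ha₂ : 0 < a₂) (hρ₁ : 0 < ρ₁) (hρ₂ : 0 < ρ₂)
    (hα : α = 1 - ρ₁ * a₁ / (ρ₂ * a₂))
    (hβ : β = (Real.sqrt a₁ + Real.sqrt a₂ * (α - 1)) /
      (Real.sqrt a₁ - Real.sqrt a₂ * (α - 1)))
    (t y : ℝ) (ht : 0 < t) (hy : 0 < y) :
    (∀ x < (0:ℝ), DifferentiableAt ℝ (fun ξ => G a₁ a₂ β t ξ y) x) ∧
    Filter.Tendsto (fun x => deriv (fun ξ => G a₁ a₂ β t ξ y) x)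
      (nhdsWithin 0 (Set.Iio 0))
      (nhds ((1 + β) / (Real.sqrt (2 * Real.pi * t) * Real.sqrt a₂) *
        (Real.sqrt a₂ * Real.sqrt a₁ * y / (a₁ * a₂ * t)) *
        Real.exp (-y ^ 2 / (2 * a₂ * t)))) :=
  G_deriv_limit_left_general a₁ a₂ β ha₁ ha₂ t y hy
end

section
/- For every t > 0 and every y ≠ 0, the one-sided limits ∂G/∂x(t,0⁻,y) = lim_{x→0⁻} ∂G/∂x(t,x,y) and ∂G/∂x(t,0⁺,y) = lim_{x→0⁺} ∂G/∂x(t,x,y) of the spatial derivative of G exist and satisfy the flux-matching relation a₁ρ₁·∂G/∂x(t,0⁻,y) − a₂ρ₂·∂G/∂x(t,0⁺,y) = 0. -/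
open Real Set Filter MeasureTheory

/-!
On each open half-line `G(t, ·, y)` coincides with a smooth combination of two Gaussians in
`x / √aᵢ`, so the one-sided limits of `∂ₓG` are the derivatives at `0` of these two extensions.
Since `sign y · |f y| = f y` and the Gaussian is even, both derivatives are multiples of
`f y · exp(-(f y)² / 2t)`, with factors proportional to `(1 + β) / √a₁` and `(1 - β) / √a₂`,
and the choice of `β` is exactly the one for which `a₁ρ₁ (1 + β) / √a₁ = a₂ρ₂ (1 - β) / √a₂`.
-/

open Topology

section OneSidedDeriv

variable {𝕜 F : Type*} [NontriviallyNormedField 𝕜] [NormedAddCommGroup F] [NormedSpace 𝕜 F]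
  {f g : 𝕜 → F} {s : Set 𝕜}

theorem differentiableAt_of_eqOn_of_isOpen (hfg : EqOn f g s) (hs : IsOpen s)
    (hg : Differentiable 𝕜 g) {x : 𝕜} (hx : x ∈ s) : DifferentiableAt 𝕜 f x :=
  (hg x).congr_of_eventuallyEq (hfg.eventuallyEq_of_mem (hs.mem_nhds hx))

theorem tendsto_deriv_nhdsWithin_of_eqOn (hfg : EqOn f g s) (hs : IsOpen s)
    (hg : ContDiff 𝕜 1 g) (a : 𝕜) : Tendsto (deriv f) (𝓝[s] a) (𝓝 (deriv g a)) :=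
  ((hg.continuous_deriv le_rfl).continuousWithinAt (s := s) (x := a)).congr'
    (eventually_nhdsWithin_of_forall fun _ hx => (hfg.deriv hs hx).symm)

end OneSidedDeriv

noncomputable def gaussian (t u : ℝ) : ℝ := exp (-u ^ 2 / (2 * t))

theorem gaussian_neg (t u : ℝ) : gaussian t (-u) = gaussian t u := by
  simp only [gaussian, neg_sq]

theorem gaussian_abs (t u : ℝ) : gaussian t |u| = gaussian t u := by
  simp only [gaussian, sq_abs]

theorem hasDerivAt_gaussian (t u : ℝ) : HasDerivAt (gaussian t) (-(u / t) * gaussian t u) u := by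
  unfold gaussian
  convert ((hasDerivAt_pow 2 u).fun_neg.div_const (2 * t)).exp using 1
  push_cast
  ring

noncomputable def gaussianPair (t w q r u : ℝ) : ℝ := gaussian t (u - q) + w * gaussian t (u - r)

theorem contDiff_gaussianPair_div (c t w q r σ : ℝ) :
    ContDiff ℝ 1 fun x => c * gaussianPair t w q r (x / σ) := by
  unfold gaussianPair gaussian
  fun_prop

theorem hasDerivAt_gaussianPair_div_zero (c t w q r σ : ℝ) :
    HasDerivAt (fun x => c * gaussianPair t w q r (x / σ))
      (c * ((q * gaussian t q + w * (r * gaussian t r)) / (σ * t))) 0 := by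
  have hlin (p : ℝ) : HasDerivAt (fun x : ℝ => x / σ - p) (1 / σ) 0 :=
    ((hasDerivAt_id (0 : ℝ)).div_const σ).sub_const p
  have hpair := ((hasDerivAt_gaussian t _).comp 0 (hlin q)).add
    (((hasDerivAt_gaussian t _).comp 0 (hlin r)).const_mul w)
  refine (hpair.const_mul c).congr_deriv ?_
  simp only [zero_div, zero_sub, gaussian_neg]
  ring

noncomputable def Gprefactor (a₁ a₂ t y : ℝ) : ℝ :=
  1 / Real.sqrt (2 * Real.pi * t) * (if y ≤ 0 then 1 / Real.sqrt a₁ else 1 / Real.sqrt a₂)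

theorem G_eqOn_Iio (a₁ a₂ β t y : ℝ) :
    EqOn (fun x => G a₁ a₂ β t x y)
      (fun x => Gprefactor a₁ a₂ t y *
        gaussianPair t (β * signFun y) (fPiece a₁ a₂ y) |fPiece a₁ a₂ y| (x / √a₁)) (Iio 0) := by
  intro x (hx : x < 0)
  have hfx : fPiece a₁ a₂ x = x / √a₁ := if_pos hx.le
  have habs : |x / √a₁| = -(x / √a₁) :=
    abs_of_nonpos (div_nonpos_of_nonpos_of_nonneg hx.le (sqrt_nonneg _))
  simp only [G, Gprefactor, gaussianPair, gaussian, hfx, habs]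
  ring_nf

theorem G_eqOn_Ioi (a₁ a₂ β t y : ℝ) :
    EqOn (fun x => G a₁ a₂ β t x y)
      (fun x => Gprefactor a₁ a₂ t y *
        gaussianPair t (β * signFun y) (fPiece a₁ a₂ y) (-|fPiece a₁ a₂ y|) (x / √a₂)) (Ioi 0) := by
  intro x (hx : 0 < x)
  have hfx : fPiece a₁ a₂ x = x / √a₂ := if_neg hx.not_ge
  have habs : |x / √a₂| = x / √a₂ := abs_of_nonneg (div_nonneg hx.le (sqrt_nonneg _))
  simp only [G, Gprefactor, gaussianPair, gaussian, hfx, habs, sub_neg_eq_add]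

theorem signFun_mul_abs_fPiece (a₁ a₂ y : ℝ) : signFun y * |fPiece a₁ a₂ y| = fPiece a₁ a₂ y := by
  have habs (σ : ℝ) : |y / √σ| = |y| / √σ := by rw [abs_div, abs_of_nonneg (sqrt_nonneg σ)]
  rcases lt_trichotomy y 0 with hy | rfl | hy
  · simp [signFun, fPiece, hy, hy.le, hy.not_gt, habs, abs_of_neg hy, neg_div]
  · simp [signFun, fPiece]
  · simp [signFun, fPiece, hy, hy.not_ge, habs, abs_of_pos hy]

theorem flux_coeff_eq {a₁ a₂ ρ₁ ρ₂ α β : ℝ}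
    (ha₁ : 0 < a₁) (ha₂ : 0 < a₂) (hρ₁ : 0 < ρ₁) (hρ₂ : 0 < ρ₂)
    (hα : α = 1 - ρ₁ * a₁ / (ρ₂ * a₂))
    (hβ : β = (√a₁ + √a₂ * (α - 1)) / (√a₁ - √a₂ * (α - 1))) :
    a₁ * ρ₁ * ((1 + β) / √a₁) = a₂ * ρ₂ * ((1 - β) / √a₂) := by
  set k := ρ₁ * a₁ / (ρ₂ * a₂) with hk
  have hden : 0 < √a₁ + √a₂ * k := by positivity
  rw [hα, sub_sub_cancel_left, mul_neg, ← sub_eq_add_neg, sub_neg_eq_add] at hβ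
  have hplus : 1 + β = 2 * √a₁ / (√a₁ + √a₂ * k) := by
    rw [hβ]; field_simp; ring
  have hminus : 1 - β = 2 * (√a₂ * k) / (√a₁ + √a₂ * k) := by
    rw [hβ]; field_simp; ring
  rw [hplus, hminus, hk]
  field_simp

theorem G_flux_matching_general (a₁ a₂ ρ₁ ρ₂ α β : ℝ)
    (ha₁ : 0 < a₁) (ha₂ : 0 < a₂) (hρ₁ : 0 < ρ₁) (hρ₂ : 0 < ρ₂)
    (hα : α = 1 - ρ₁ * a₁ / (ρ₂ * a₂))
    (hβ : β = (Real.sqrt a₁ + Real.sqrt a₂ * (α - 1)) /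
      (Real.sqrt a₁ - Real.sqrt a₂ * (α - 1)))
    (t y : ℝ) :
    ∃ Lminus Lplus : ℝ,
      (∀ x : ℝ, x ≠ 0 → DifferentiableAt ℝ (fun ξ => G a₁ a₂ β t ξ y) x) ∧
      Filter.Tendsto (fun x => deriv (fun ξ => G a₁ a₂ β t ξ y) x)
        (nhdsWithin 0 (Set.Iio 0)) (nhds Lminus) ∧
      Filter.Tendsto (fun x => deriv (fun ξ => G a₁ a₂ β t ξ y) x)
        (nhdsWithin 0 (Set.Ioi 0)) (nhds Lplus) ∧
      a₁ * ρ₁ * Lminus - a₂ * ρ₂ * Lplus = 0 := by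
  set c := Gprefactor a₁ a₂ t y
  set fy := fPiece a₁ a₂ y
  have hleft := G_eqOn_Iio a₁ a₂ β t y
  have hright := G_eqOn_Ioi a₁ a₂ β t y
  have hCleft := contDiff_gaussianPair_div c t (β * signFun y) fy |fy| √a₁
  have hCright := contDiff_gaussianPair_div c t (β * signFun y) fy (-|fy|) √a₂
  refine ⟨_, _, fun x hx => ?_, tendsto_deriv_nhdsWithin_of_eqOn hleft isOpen_Iio hCleft 0,
    tendsto_deriv_nhdsWithin_of_eqOn hright isOpen_Ioi hCright 0, ?_⟩
  · rcases hx.lt_or_gt with hx | hx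
    · exact differentiableAt_of_eqOn_of_isOpen hleft isOpen_Iio
        (hCleft.differentiable one_ne_zero) hx
    · exact differentiableAt_of_eqOn_of_isOpen hright isOpen_Ioi
        (hCright.differentiable one_ne_zero) hx
  have hsign : signFun y * |fy| = fy := signFun_mul_abs_fPiece a₁ a₂ y
  rw [(hasDerivAt_gaussianPair_div_zero ..).deriv, (hasDerivAt_gaussianPair_div_zero ..).deriv,
    gaussian_neg, gaussian_abs]
  linear_combination (c * fy * gaussian t fy / t) * flux_coeff_eq ha₁ ha₂ hρ₁ hρ₂ hα hβ
    + (c * β * gaussian t fy / t * (a₁ * ρ₁ / √a₁ + a₂ * ρ₂ / √a₂)) * hsign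

theorem G_flux_matching (a₁ a₂ ρ₁ ρ₂ α β : ℝ)
    (ha₁ : 0 < a₁) (ha₂ : 0 < a₂) (hρ₁ : 0 < ρ₁) (hρ₂ : 0 < ρ₂)
    (hα : α = 1 - ρ₁ * a₁ / (ρ₂ * a₂))
    (hβ : β = (Real.sqrt a₁ + Real.sqrt a₂ * (α - 1)) /
      (Real.sqrt a₁ - Real.sqrt a₂ * (α - 1)))
    (t y : ℝ) (ht : 0 < t) (hy : y ≠ 0) :
    ∃ Lminus Lplus : ℝ,
      (∀ x : ℝ, x ≠ 0 → DifferentiableAt ℝ (fun ξ => G a₁ a₂ β t ξ y) x) ∧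
      Filter.Tendsto (fun x => deriv (fun ξ => G a₁ a₂ β t ξ y) x)
        (nhdsWithin 0 (Set.Iio 0)) (nhds Lminus) ∧
      Filter.Tendsto (fun x => deriv (fun ξ => G a₁ a₂ β t ξ y) x)
        (nhdsWithin 0 (Set.Ioi 0)) (nhds Lplus) ∧
      a₁ * ρ₁ * Lminus - a₂ * ρ₂ * Lplus = 0 :=
  G_flux_matching_general a₁ a₂ ρ₁ ρ₂ α β ha₁ ha₂ hρ₁ hρ₂ hα hβ t y
end

section
/- For every y ≠ 0, for all t > 0 and all x > 0, the function G satisfies the heat equation with coefficient a₂/2 in the right half-line: ∂G/∂t(t,x,y) = (a₂/2)·∂²G/∂x²(t,x,y), where the derivatives are the usual partial derivatives of the explicit function (t,x) ↦ G(t,x,y) on (0,∞) × (0,∞). -/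
/-!
For `x > 0` both exponents of `G` only involve `f x = x / √a₂`, so near such `x` the function
`(t, x) ↦ G t x y` is a superposition of two Gaussian kernels `exp (-(x / √a₂ - c) ^ 2 / (2t)) / √(2πt)`
(with centres `c = f y` and `c = -|f y|`). Each of them solves `u_t = (a₂ / 2) u_xx`, by direct
differentiation, and the heat equation at a point only sees the function near that point.
-/

open Real Set Filter MeasureTheory

open scoped Topology

def SatisfiesHeatEquationAt (D : ℝ) (u : ℝ → ℝ → ℝ) (t x : ℝ) : Prop :=
  DifferentiableAt ℝ (fun τ => u τ x) t ∧ DifferentiableAt ℝ (u t) x ∧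
    DifferentiableAt ℝ (deriv (u t)) x ∧
    deriv (fun τ => u τ x) t = D * deriv (deriv (u t)) x

theorem SatisfiesHeatEquationAt.congr {D t x : ℝ} {u v : ℝ → ℝ → ℝ}
    (h : SatisfiesHeatEquationAt D v t x) (huv : ∀ᶠ ξ in 𝓝 x, ∀ τ, u τ ξ = v τ ξ) :
    SatisfiesHeatEquationAt D u t x := by
  obtain ⟨hvt, hvx, hvxx, hv⟩ := h
  have htime : (fun τ => u τ x) = fun τ => v τ x := funext huv.self_of_nhds
  have hspace : u t =ᶠ[𝓝 x] v t := huv.mono fun ξ hξ => hξ t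
  refine ⟨htime ▸ hvt, hvx.congr_of_eventuallyEq hspace,
    hvxx.congr_of_eventuallyEq hspace.deriv, ?_⟩
  rw [htime, hv, hspace.deriv.deriv_eq]

noncomputable def heatKernel (s c t x : ℝ) : ℝ :=
  1 / √(2 * π * t) * exp (-(x / s - c) ^ 2 / (2 * t))

section heatKernel

variable (s c : ℝ) {t : ℝ}

theorem heatKernel_hasDerivAt_time (ht : 0 < t) (x : ℝ) :
    HasDerivAt (fun τ => heatKernel s c τ x)
      ((-1 / (2 * t) + (x / s - c) ^ 2 / (2 * t ^ 2)) * heatKernel s c t x) t := by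
  have hpos : 0 < 2 * π * t := by positivity
  have hlin : HasDerivAt (fun τ => 2 * π * τ) (2 * π) t := by
    simpa using (hasDerivAt_id t).const_mul (2 * π)
  have hprefactor : HasDerivAt (fun τ => 1 / √(2 * π * τ))
      (-(2 * π / (2 * √(2 * π * t))) / √(2 * π * t) ^ 2) t := by
    simpa only [one_div] using (hlin.sqrt hpos.ne').fun_inv (sqrt_pos.mpr hpos).ne'
  have hexponent : HasDerivAt (fun τ => -(x / s - c) ^ 2 / (2 * τ))
      ((0 * (2 * t) - -(x / s - c) ^ 2 * 2) / (2 * t) ^ 2) t :=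
    (hasDerivAt_const t _).div (by simpa using (hasDerivAt_id t).const_mul 2) (by positivity)
  refine (hprefactor.mul hexponent.exp).congr_deriv ?_
  rw [heatKernel, sq_sqrt hpos.le]
  field_simp
  ring

theorem heatKernel_hasDerivAt_space (t x : ℝ) :
    HasDerivAt (heatKernel s c t) (-((x / s - c) / (s * t)) * heatKernel s c t x) x := by
  have hcentred : HasDerivAt (fun ξ => ξ / s - c) (1 / s) x := by
    simpa using ((hasDerivAt_id x).div_const s).sub_const c
  have hexponent : HasDerivAt (fun ξ => -(ξ / s - c) ^ 2 / (2 * t))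
      (-(2 * (x / s - c) ^ 1 * (1 / s)) / (2 * t)) x := (hcentred.pow 2).neg.div_const (2 * t)
  refine (hexponent.exp.const_mul (1 / √(2 * π * t))).congr_deriv ?_
  rw [heatKernel]
  field_simp

theorem deriv_heatKernel_space (t : ℝ) :
    deriv (heatKernel s c t) = fun ξ => -((ξ / s - c) / (s * t)) * heatKernel s c t ξ :=
  funext fun ξ => (heatKernel_hasDerivAt_space s c t ξ).deriv

theorem heatKernel_hasDerivAt_deriv_space (t x : ℝ) :
    HasDerivAt (deriv (heatKernel s c t))
      ((-1 / (s ^ 2 * t) + (x / s - c) ^ 2 / (s ^ 2 * t ^ 2)) * heatKernel s c t x) x := by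
  have hslope : HasDerivAt (fun ξ => -((ξ / s - c) / (s * t))) (-(1 / s / (s * t))) x :=
    ((((hasDerivAt_id x).div_const s).sub_const c).div_const (s * t)).neg
  rw [deriv_heatKernel_space]
  refine (hslope.mul (heatKernel_hasDerivAt_space s c t x)).congr_deriv ?_
  field_simp

end heatKernel

theorem satisfiesHeatEquationAt_heatKernel_superposition (a b s c c' : ℝ) {t : ℝ} (ht : 0 < t)
    (x : ℝ) (hs : s ≠ 0) :
    SatisfiesHeatEquationAt (s ^ 2 / 2)
      (fun τ ξ => a * heatKernel s c τ ξ + b * heatKernel s c' τ ξ) t x := by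
  have htime := ((heatKernel_hasDerivAt_time s c ht x).const_mul a).fun_add
    ((heatKernel_hasDerivAt_time s c' ht x).const_mul b)
  have hspace (ξ : ℝ) := ((heatKernel_hasDerivAt_space s c t ξ).const_mul a).fun_add
    ((heatKernel_hasDerivAt_space s c' t ξ).const_mul b)
  have hderiv : deriv (fun ξ => a * heatKernel s c t ξ + b * heatKernel s c' t ξ) =
      fun ξ => a * deriv (heatKernel s c t) ξ + b * deriv (heatKernel s c' t) ξ := by
    simp only [deriv_heatKernel_space]
    exact funext fun ξ => (hspace ξ).deriv
  have hspace2 := ((heatKernel_hasDerivAt_deriv_space s c t x).const_mul a).fun_add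
    ((heatKernel_hasDerivAt_deriv_space s c' t x).const_mul b)
  rw [← hderiv] at hspace2
  refine ⟨htime.differentiableAt, (hspace x).differentiableAt, hspace2.differentiableAt, ?_⟩
  rw [htime.deriv, hspace2.deriv]
  field_simp

theorem G_eq_heatKernel_superposition (a₁ a₂ β τ y : ℝ) {ξ : ℝ} (hξ : 0 < ξ) :
    G a₁ a₂ β τ ξ y =
      (if y ≤ 0 then 1 / √a₁ else 1 / √a₂) * heatKernel √a₂ (fPiece a₁ a₂ y) τ ξ +
        (if y ≤ 0 then 1 / √a₁ else 1 / √a₂) * (β * signFun y) *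
          heatKernel √a₂ (-|fPiece a₁ a₂ y|) τ ξ := by
  have hf : fPiece a₁ a₂ ξ = ξ / √a₂ := if_neg hξ.not_ge
  have habs : |fPiece a₁ a₂ ξ| = ξ / √a₂ := by
    rw [hf, abs_of_nonneg (div_nonneg hξ.le (sqrt_nonneg _))]
  rw [G, heatKernel, heatKernel, habs, hf, sub_neg_eq_add]
  ring

theorem G_heat_equation_right_general (a₁ a₂ β : ℝ) (ha₂ : 0 < a₂) (y : ℝ) (t : ℝ) (ht : 0 < t)
    (x : ℝ) (hx : 0 < x) :
    DifferentiableAt ℝ (fun τ => G a₁ a₂ β τ x y) t ∧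
    DifferentiableAt ℝ (fun ξ => G a₁ a₂ β t ξ y) x ∧
    DifferentiableAt ℝ (deriv (fun ξ => G a₁ a₂ β t ξ y)) x ∧
    deriv (fun τ => G a₁ a₂ β τ x y) t =
      (a₂ / 2) * deriv (deriv (fun ξ => G a₁ a₂ β t ξ y)) x := by
  have h := (satisfiesHeatEquationAt_heatKernel_superposition _ _ _ _ _ ht x
    (sqrt_pos.mpr ha₂).ne').congr (u := fun τ ξ => G a₁ a₂ β τ ξ y) <| by
      filter_upwards [Ioi_mem_nhds hx] with ξ hξ τ
      exact G_eq_heatKernel_superposition a₁ a₂ β τ y hξ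
  rwa [sq_sqrt ha₂.le] at h

theorem G_heat_equation_right (a₁ a₂ ρ₁ ρ₂ α β : ℝ)
    (ha₁ : 0 < a₁) (ha₂ : 0 < a₂) (hρ₁ : 0 < ρ₁) (hρ₂ : 0 < ρ₂)
    (hα : α = 1 - ρ₁ * a₁ / (ρ₂ * a₂))
    (hβ : β = (Real.sqrt a₁ + Real.sqrt a₂ * (α - 1)) /
      (Real.sqrt a₁ - Real.sqrt a₂ * (α - 1)))
    (y : ℝ) (hy : y ≠ 0) (t : ℝ) (ht : 0 < t) (x : ℝ) (hx : 0 < x) :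
    DifferentiableAt ℝ (fun τ => G a₁ a₂ β τ x y) t ∧
    DifferentiableAt ℝ (fun ξ => G a₁ a₂ β t ξ y) x ∧
    DifferentiableAt ℝ (deriv (fun ξ => G a₁ a₂ β t ξ y)) x ∧
    deriv (fun τ => G a₁ a₂ β τ x y) t =
      (a₂ / 2) * deriv (deriv (fun ξ => G a₁ a₂ β t ξ y)) x :=
  G_heat_equation_right_general a₁ a₂ β ha₂ y t ht x hx
end

section
/- There exists a constant C > 0, depending only on a₁, a₂, ρ₁ and ρ₂, such that for every t > 0 and every y ∈ ℝ, the Lebesgue integral over the first spatial variable satisfies ∫_ℝ |G(t,x,y)| dx ≤ C. -/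
/-! Since `(u - m)² ≤ (|u| + |m|)²`, the reflected Gaussian in `G` is dominated by the direct one,
and `exp (-(fPiece x - m)² / 2t)` is dominated by the sum of the two Gaussians `x ↦ exp (-(x/√aᵢ - m)² / 2t)`,
whose integrals are `√aᵢ · √(2πt)`. The factor `√(2πt)` cancels the normalisation of `G`, so the bound
`(1 + |β|) (1/√a₁ + 1/√a₂) (√a₁ + √a₂)` is uniform in `t` and `y`. -/

open Real Set Filter MeasureTheory

section Gaussian

variable {s t : ℝ}

lemma exp_neg_sq_div_eq (hs : s ≠ 0) (m x : ℝ) :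
    exp (-(x / s - m) ^ 2 / (2 * t)) = exp (-(1 / (2 * t * s ^ 2)) * (x - s * m) ^ 2) := by
  congr 1
  rw [show x / s - m = (x - s * m) / s by field_simp, div_pow]
  ring

lemma integrable_exp_neg_sq_div (hs : 0 < s) (ht : 0 < t) (m : ℝ) :
    Integrable fun x => exp (-(x / s - m) ^ 2 / (2 * t)) := by
  simp_rw [exp_neg_sq_div_eq hs.ne']
  exact (integrable_exp_neg_mul_sq (by positivity)).comp_sub_right (s * m)

lemma integral_exp_neg_sq_div (hs : 0 < s) (ht : 0 < t) (m : ℝ) :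
    ∫ x, exp (-(x / s - m) ^ 2 / (2 * t)) = s * √(2 * π * t) := by
  simp_rw [exp_neg_sq_div_eq hs.ne']
  rw [integral_sub_right_eq_self (fun u => exp (-(1 / (2 * t * s ^ 2)) * u ^ 2)) (s * m),
    integral_gaussian, show π / (1 / (2 * t * s ^ 2)) = 2 * π * t * s ^ 2 by field_simp,
    sqrt_mul (by positivity), sqrt_sq hs.le, mul_comm]

end Gaussian

lemma le_add_of_comp_fPiece {φ : ℝ → ℝ} (hφ : ∀ u, 0 ≤ φ u) (a₁ a₂ x : ℝ) :
    φ (fPiece a₁ a₂ x) ≤ φ (x / √a₁) + φ (x / √a₂) := by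
  unfold fPiece
  split_ifs
  · linarith [hφ (x / √a₂)]
  · linarith [hφ (x / √a₁)]

lemma abs_signFun_le_one (y : ℝ) : |signFun y| ≤ 1 := by
  unfold signFun
  split_ifs <;> simp

lemma exp_neg_sq_abs_add_le {t : ℝ} (ht : 0 ≤ t) (u m : ℝ) :
    exp (-(|u| + |m|) ^ 2 / (2 * t)) ≤ exp (-(u - m) ^ 2 / (2 * t)) := by
  have h : (u - m) ^ 2 ≤ (|u| + |m|) ^ 2 :=
    sq_le_sq' (by linarith [neg_abs_le u, le_abs_self m]) (by linarith [le_abs_self u, neg_abs_le m])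
  gcongr

lemma abs_G_le (a₁ a₂ β : ℝ) {t : ℝ} (ht : 0 ≤ t) (x y : ℝ) :
    |G a₁ a₂ β t x y| ≤ (1 + |β|) * (1 / √a₁ + 1 / √a₂) / √(2 * π * t) *
      (exp (-(x / √a₁ - fPiece a₁ a₂ y) ^ 2 / (2 * t)) +
        exp (-(x / √a₂ - fPiece a₁ a₂ y) ^ 2 / (2 * t))) := by
  set m := fPiece a₁ a₂ y
  set E := exp (-(fPiece a₁ a₂ x - m) ^ 2 / (2 * t))
  have hweight : |if y ≤ 0 then 1 / √a₁ else 1 / √a₂| ≤ 1 / √a₁ + 1 / √a₂ := by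
    have h₁ : 0 ≤ 1 / √a₁ := by positivity
    have h₂ : 0 ≤ 1 / √a₂ := by positivity
    split_ifs <;> rw [abs_of_nonneg ‹_›] <;> linarith
  have hreflected : |β * signFun y * exp (-(|fPiece a₁ a₂ x| + |m|) ^ 2 / (2 * t))| ≤ |β| * E := by
    rw [abs_mul, abs_mul, abs_of_pos (exp_pos _)]
    calc |β| * |signFun y| * exp (-(|fPiece a₁ a₂ x| + |m|) ^ 2 / (2 * t)) ≤ |β| * 1 * E := by
          gcongr
          · exact abs_signFun_le_one y
          · exact exp_neg_sq_abs_add_le ht _ _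
      _ = |β| * E := by ring
  have hsum : |E + β * signFun y * exp (-(|fPiece a₁ a₂ x| + |m|) ^ 2 / (2 * t))|
      ≤ (1 + |β|) * (exp (-(x / √a₁ - m) ^ 2 / (2 * t)) + exp (-(x / √a₂ - m) ^ 2 / (2 * t))) := by
    have hE := le_add_of_comp_fPiece (φ := fun u => exp (-(u - m) ^ 2 / (2 * t)))
      (fun _ => (exp_pos _).le) a₁ a₂ x
    have htri := abs_add_le E (β * signFun y * exp (-(|fPiece a₁ a₂ x| + |m|) ^ 2 / (2 * t)))
    rw [abs_of_pos (exp_pos _)] at htri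
    nlinarith [abs_nonneg β]
  unfold G
  rw [abs_mul, abs_mul, abs_of_nonneg (by positivity : (0 : ℝ) ≤ 1 / √(2 * π * t))]
  calc 1 / √(2 * π * t) * |if y ≤ 0 then 1 / √a₁ else 1 / √a₂| * |E + _|
      ≤ 1 / √(2 * π * t) * (1 / √a₁ + 1 / √a₂) * ((1 + |β|) *
          (exp (-(x / √a₁ - m) ^ 2 / (2 * t)) + exp (-(x / √a₂ - m) ^ 2 / (2 * t)))) := by
        gcongr
    _ = _ := by ring

theorem G_integral_bound_in_x_general (a₁ a₂ β : ℝ)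
    (ha₁ : 0 < a₁) (ha₂ : 0 < a₂) :
    ∃ C : ℝ, 0 < C ∧ ∀ t > (0:ℝ), ∀ y : ℝ,
      (∫ x : ℝ, |G a₁ a₂ β t x y|) ≤ C := by
  have hs₁ : 0 < √a₁ := sqrt_pos.2 ha₁
  have hs₂ : 0 < √a₂ := sqrt_pos.2 ha₂
  refine ⟨(1 + |β|) * (1 / √a₁ + 1 / √a₂) * (√a₁ + √a₂), by positivity, fun t ht y => ?_⟩
  set m := fPiece a₁ a₂ y
  have hint₁ := integrable_exp_neg_sq_div hs₁ ht m
  have hint₂ := integrable_exp_neg_sq_div hs₂ ht m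
  have hpos : 0 < √(2 * π * t) := by positivity
  calc ∫ x, |G a₁ a₂ β t x y|
      ≤ ∫ x, (1 + |β|) * (1 / √a₁ + 1 / √a₂) / √(2 * π * t) *
          (exp (-(x / √a₁ - m) ^ 2 / (2 * t)) + exp (-(x / √a₂ - m) ^ 2 / (2 * t))) :=
        integral_mono_of_nonneg (.of_forall fun _ => abs_nonneg _)
          ((hint₁.add hint₂).const_mul _) (.of_forall (abs_G_le a₁ a₂ β ht.le · y))
    _ = (1 + |β|) * (1 / √a₁ + 1 / √a₂) * (√a₁ + √a₂) := by
        rw [integral_const_mul, integral_add hint₁ hint₂, integral_exp_neg_sq_div hs₁ ht,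
          integral_exp_neg_sq_div hs₂ ht]
        field_simp

theorem G_integral_bound_in_x (a₁ a₂ ρ₁ ρ₂ α β : ℝ)
    (ha₁ : 0 < a₁) (ha₂ : 0 < a₂) (hρ₁ : 0 < ρ₁) (hρ₂ : 0 < ρ₂)
    (hα : α = 1 - ρ₁ * a₁ / (ρ₂ * a₂))
    (hβ : β = (Real.sqrt a₁ + Real.sqrt a₂ * (α - 1)) /
      (Real.sqrt a₁ - Real.sqrt a₂ * (α - 1))) :
    ∃ C : ℝ, 0 < C ∧ ∀ t > (0:ℝ), ∀ y : ℝ,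
      (∫ x : ℝ, |G a₁ a₂ β t x y|) ≤ C :=
  G_integral_bound_in_x_general a₁ a₂ β ha₁ ha₂
end
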